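/- There exists a universal constant C₀ > 0 with the following property. Let s₁, s₂ ∈ {+1, −1}, let k, k₁, k₂ ∈ ℕ and j, j₁, j₂ ∈ ℤ, and let φ, u₁, u₂ : ℝ × ℝ² → ℂ be Schwartz functions whose space-time Fourier transforms satisfy supp φ̂ ⊆ A_k ∩ B^{+1}_j and supp ûᵢ ⊆ A_{kᵢ} ∩ B^{sᵢ}_{jᵢ} for i = 1, 2. Suppose either (a) s₁ = +1 and s₂ = −1, or (b) s₁ = −1, s₂ = +1 and k ≤ min(k₁, k₂) − C₀. If max(j, j₁, j₂) ≤ max(k, k₁, k₂) − C₀, then ∫_{ℝ×ℝ²} φ(t,x)·u₁(t,x)·conj(u₂(t,x)) dt dx = 0. -/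

import Mathlib

/-!
By Plancherel, the integral is the pairing of `𝓕 (φ u₁)` with `𝓕 u₂`, and
`𝓕 (φ u₁) = 𝓕 φ ⋆ 𝓕 u₁` is supported in `supp φ̂ + supp û₁`; so it vanishes as soon as
`a + b ∉ supp û₂` for all `a ∈ supp φ̂`, `b ∈ supp û₁`. For such a triple the three modulations
`τ + s⟨ξ⟩` add up to the resonance `⟨ξ_a⟩ + s₁⟨ξ_b⟩ - s₂⟨ξ_a + ξ_b⟩`, which is therefore
`O(2^{max j})`. In case (a) it is a sum of three brackets, and in case (b) the two large brackets
beat the small one, so in both cases it is `≳ 2^{max k}`; `C₀ = 10` makes the two bounds clash.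
-/

noncomputable section

open MeasureTheory
open scoped ENNReal

/-- ℝ² as a Euclidean space. -/
abbrev E2 := EuclideanSpace ℝ (Fin 2)

/-- Space-time ℝ_t × ℝ²_x (equivalently its Fourier dual ℝ_τ × ℝ²_ξ) as ℝ³,
with the time (resp. τ) variable being the 0-th coordinate. -/
abbrev E3 := EuclideanSpace ℝ (Fin 3)

/-- The spatial (frequency) part ξ ∈ ℝ² of a space-time point `z = (τ, ξ)`. -/
def xiv (z : E3) : E2 := (WithLp.equiv 2 (Fin 2 → ℝ)).symm ![z 1, z 2]

/-- The Japanese bracket `⟨ξ⟩ = √(1 + |ξ|²)` of the frequency part. -/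
def jxi (z : E3) : ℝ := Real.sqrt (1 + ‖xiv z‖ ^ 2)

/-- The dyadic frequency region `A_k = {(τ,ξ) : |ξ| ≤ 2^{k+2}, and |ξ| ≥ 2^{k-2} if k ≥ 1}`. -/
def Ak (k : ℕ) : Set E3 :=
  {z | ‖xiv z‖ ≤ (2 : ℝ) ^ ((k : ℝ) + 2) ∧ (1 ≤ k → (2 : ℝ) ^ ((k : ℝ) - 2) ≤ ‖xiv z‖)}

/-- The dyadic modulation region `B^s_j = {(τ,ξ) : 2^{j-2} ≤ |τ + s⟨ξ⟩| ≤ 2^{j+2}}`. -/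
def Bsj (s : ℝ) (j : ℤ) : Set E3 :=
  {z | (2 : ℝ) ^ ((j : ℝ) - 2) ≤ |z 0 + s * jxi z| ∧ |z 0 + s * jxi z| ≤ (2 : ℝ) ^ ((j : ℝ) + 2)}

open SchwartzMap FourierTransform ContinuousLinearMap Function
open scoped SchwartzMap Convolution Pointwise

section FourierProduct

variable {V : Type*} [NormedAddCommGroup V] [InnerProductSpace ℝ V] [FiniteDimensional ℝ V]
  [MeasurableSpace V] [BorelSpace V]

theorem SchwartzMap.fourier_pairing_mul (f g : 𝓢(V, ℂ)) :
    𝓕 (pairing (mul ℂ ℂ) f g) = convolution (mul ℂ ℂ) (𝓕 f) (𝓕 g) := by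
  -- `𝓕⁻ h x = 𝓕 h (-x)`, and `𝓕` turns `𝓕 f ⋆ 𝓕 g` into `𝓕 (𝓕 f) * 𝓕 (𝓕 g)`
  have h : pairing (mul ℂ ℂ) f g = 𝓕⁻ (convolution (mul ℂ ℂ) (𝓕 f) (𝓕 g)) := by
    ext x
    have hf := congr($(FourierPair.fourierInv_fourier_eq (F := 𝓢(V, ℂ)) f) x)
    have hg := congr($(FourierPair.fourierInv_fourier_eq (F := 𝓢(V, ℂ)) g) x)
    simp only [fourierInv_apply_eq, fourier_convolution, compCLMOfContinuousLinearEquiv_apply,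
      comp_apply, pairing_apply_apply, mul_apply'] at hf hg ⊢
    rw [← hf, ← hg]
  rw [h, fourier_fourierInv_eq]

theorem SchwartzMap.support_fourier_mul_subset (f g : 𝓢(V, ℂ)) :
    support (𝓕 fun x ↦ f x * g x) ⊆ support (𝓕 ⇑f) + support (𝓕 ⇑g) := by
  have h : (𝓕 fun x ↦ f x * g x) = 𝓕 ⇑f ⋆[mul ℂ ℂ] 𝓕 ⇑g := by
    ext ξ
    have := congr($(fourier_pairing_mul f g) ξ)
    rwa [convolution_apply, fourier_coe, fourier_coe, fourier_coe] at this
  rw [h]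
  exact support_convolution_subset _

theorem SchwartzMap.integral_mul_conj_eq_zero_of_disjoint (f g : 𝓢(V, ℂ))
    (h : Disjoint (support (𝓕 ⇑f)) (support (𝓕 ⇑g))) :
    ∫ x, f x * starRingEnd ℂ (g x) = 0 := by
  have hvanish (ξ : V) : 𝓕 ⇑f ξ * starRingEnd ℂ (𝓕 ⇑g ξ) = 0 := by
    by_contra hξ
    obtain ⟨hf, hg⟩ := mul_ne_zero_iff.mp hξ
    exact h.ne_of_mem hf ((map_ne_zero _).mp hg) rfl
  have hplancherel := integral_inner_fourier_fourier g f
  simp only [RCLike.inner_apply, fourier_coe, hvanish, integral_zero] at hplancherel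
  exact hplancherel.symm

end FourierProduct

lemma one_le_jxi (z : E3) : 1 ≤ jxi z :=
  Real.one_le_sqrt.mpr (le_add_of_nonneg_right (by positivity))

lemma norm_xiv_le_jxi (z : E3) : ‖xiv z‖ ≤ jxi z :=
  Real.le_sqrt_of_sq_le (le_add_of_nonneg_left zero_le_one)

lemma jxi_le_one_add_norm_xiv (z : E3) : jxi z ≤ 1 + ‖xiv z‖ :=
  Real.sqrt_le_iff.mpr ⟨by positivity, by nlinarith [norm_nonneg (xiv z)]⟩

lemma jxi_le_of_mem_Ak {k : ℕ} {z : E3} (hz : z ∈ Ak k) : jxi z ≤ 1 + 2 ^ ((k : ℝ) + 2) :=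
  (jxi_le_one_add_norm_xiv z).trans (add_le_add_right hz.1 1)

lemma two_rpow_sub_two_le_jxi_of_mem_Ak {k : ℕ} {z : E3} (hz : z ∈ Ak k) :
    (2 : ℝ) ^ ((k : ℝ) - 2) ≤ jxi z := by
  rcases Nat.eq_zero_or_pos k with rfl | hk
  · exact (Real.rpow_le_one_of_one_le_of_nonpos one_le_two (by norm_num)).trans (one_le_jxi z)
  · exact (hz.2 hk).trans (norm_xiv_le_jxi z)

lemma abs_resonance_le {s s₁ s₂ : ℝ} {j j₁ j₂ : ℤ} {a b : E3} (ha : a ∈ Bsj s j)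
    (hb : b ∈ Bsj s₁ j₁) (hab : a + b ∈ Bsj s₂ j₂) :
    |s * jxi a + s₁ * jxi b - s₂ * jxi (a + b)| ≤
      2 ^ ((j : ℝ) + 2) + 2 ^ ((j₁ : ℝ) + 2) + 2 ^ ((j₂ : ℝ) + 2) := by
  have hsum : s * jxi a + s₁ * jxi b - s₂ * jxi (a + b) =
      (a 0 + s * jxi a) + (b 0 + s₁ * jxi b) - ((a + b) 0 + s₂ * jxi (a + b)) := by
    rw [PiLp.add_apply]; ring
  rw [hsum]
  exact (abs_sub _ _).trans (add_le_add ((abs_add_le _ _).trans (add_le_add ha.2 hb.2)) hab.2)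

lemma two_rpow_sub_two_max (x y z : ℝ) :
    (2 : ℝ) ^ (max x (max y z) - 2) = max (2 ^ (x - 2)) (max (2 ^ (y - 2)) (2 ^ (z - 2))) := by
  have hmono : Monotone fun x : ℝ ↦ (2 : ℝ) ^ (x - 2) := fun _ _ h ↦
    Real.rpow_le_rpow_of_exponent_le one_le_two (by linarith)
  exact (hmono.map_max).trans (congrArg _ hmono.map_max)

theorem add_notMem_Ak_inter_Bsj {s₁ s₂ : ℝ} {k k₁ k₂ : ℕ} {j j₁ j₂ : ℤ} {a b : E3}
    (ha : a ∈ Ak k ∩ Bsj 1 j) (hb : b ∈ Ak k₁ ∩ Bsj s₁ j₁)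
    (hcase : (s₁ = 1 ∧ s₂ = -1) ∨
      (s₁ = -1 ∧ s₂ = 1 ∧ (k : ℝ) ≤ min (k₁ : ℝ) (k₂ : ℝ) - 10))
    (hJ : (max j (max j₁ j₂) : ℝ) ≤ (max k (max k₁ k₂) : ℝ) - 10) :
    a + b ∉ Ak k₂ ∩ Bsj s₂ j₂ := by
  rintro ⟨habA, habB⟩
  set K : ℝ := max (k : ℝ) (max (k₁ : ℝ) (k₂ : ℝ))
  set t : ℝ := 2 ^ (K - 10)
  have ht : 0 < t := by positivity
  have hpow (x : ℝ) (hx : x ≤ K - 10) : (2 : ℝ) ^ (x + 2) ≤ 4 * t :=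
    calc (2 : ℝ) ^ (x + 2) ≤ 2 ^ (K - 10 + 2) :=
          Real.rpow_le_rpow_of_exponent_le one_le_two (by linarith)
      _ = 4 * t := by rw [Real.rpow_add two_pos]; norm_num; ring
  have hK : (2 : ℝ) ^ (K - 2) = 256 * t := by
    rw [show K - 2 = K - 10 + 8 by ring, Real.rpow_add two_pos]; norm_num; ring
  simp only [max_le_iff] at hJ
  have hres := abs_resonance_le ha.2 hb.2 habB
  have hR : |1 * jxi a + s₁ * jxi b - s₂ * jxi (a + b)| ≤ 12 * t := by
    linarith [hpow j (by linarith), hpow j₁ (by linarith), hpow j₂ (by linarith)]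
  have hka := two_rpow_sub_two_le_jxi_of_mem_Ak ha.1
  have hkb := two_rpow_sub_two_le_jxi_of_mem_Ak hb.1
  have hkab := two_rpow_sub_two_le_jxi_of_mem_Ak habA
  have ha₁ := one_le_jxi a
  have hb₁ := one_le_jxi b
  have hab₁ := one_le_jxi (a + b)
  rcases hcase with ⟨rfl, rfl⟩ | ⟨rfl, rfl, hk⟩
  · have hlow : (2 : ℝ) ^ (K - 2) ≤ jxi a + jxi b + jxi (a + b) := by
      rw [two_rpow_sub_two_max]
      exact max_le (by linarith) (max_le (by linarith) (by linarith))
    linarith [le_abs_self (1 * jxi a + 1 * jxi b - -1 * jxi (a + b))]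
  · have hk₁ : (k : ℝ) + 10 ≤ k₁ := by linarith [min_le_left (k₁ : ℝ) k₂]
    have hk₂ : (k : ℝ) + 10 ≤ k₂ := by linarith [min_le_right (k₁ : ℝ) k₂]
    have hK₁ : (k₁ : ℝ) ≤ K := le_max_of_le_right (le_max_left _ _)
    have hkb' : (2 : ℝ) ^ ((k : ℝ) - 2) ≤ jxi b :=
      (Real.rpow_le_rpow_of_exponent_le one_le_two (by linarith)).trans hkb
    have hlow : (2 : ℝ) ^ (K - 2) ≤ jxi b + jxi (a + b) := by
      rw [two_rpow_sub_two_max]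
      exact max_le (by linarith) (max_le (by linarith) (by linarith))
    have hup : jxi a ≤ 1 + 4 * t :=
      (jxi_le_of_mem_Ak ha.1).trans (by linarith [hpow k (by linarith)])
    have hone : 1 ≤ t := Real.one_le_rpow one_le_two (by linarith)
    linarith [neg_abs_le (1 * jxi a + -1 * jxi b - 1 * jxi (a + b))]

theorem stmt9 :
    ∃ C₀ : ℝ, 0 < C₀ ∧ ∀ (s₁ s₂ : ℝ), (s₁ = 1 ∨ s₁ = -1) → (s₂ = 1 ∨ s₂ = -1) →
      ∀ (k k₁ k₂ : ℕ) (j j₁ j₂ : ℤ) (φ u₁ u₂ : SchwartzMap E3 ℂ),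
      Function.support (FourierTransform.fourier (⇑φ : E3 → ℂ)) ⊆ Ak k ∩ Bsj 1 j →
      Function.support (FourierTransform.fourier (⇑u₁ : E3 → ℂ)) ⊆ Ak k₁ ∩ Bsj s₁ j₁ →
      Function.support (FourierTransform.fourier (⇑u₂ : E3 → ℂ)) ⊆ Ak k₂ ∩ Bsj s₂ j₂ →
      ((s₁ = 1 ∧ s₂ = -1) ∨
        (s₁ = -1 ∧ s₂ = 1 ∧ (k : ℝ) ≤ min (k₁ : ℝ) (k₂ : ℝ) - C₀)) →
      ((max j (max j₁ j₂) : ℝ) ≤ (max k (max k₁ k₂) : ℝ) - C₀) →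
      ∫ z : E3, φ z * u₁ z * (starRingEnd ℂ) (u₂ z) = 0 := by
  refine ⟨10, by norm_num, fun s₁ s₂ _ _ k k₁ k₂ j j₁ j₂ φ u₁ u₂ hφ hu₁ hu₂ hcase hJ ↦ ?_⟩
  have hdisj : Disjoint (support (𝓕 fun z ↦ φ z * u₁ z)) (support (𝓕 ⇑u₂)) := by
    refine Set.disjoint_left.mpr fun ξ hξ hξ₂ ↦ ?_
    obtain ⟨a, ha, b, hb, rfl⟩ := support_fourier_mul_subset φ u₁ hξ
    exact add_notMem_Ak_inter_Bsj (hφ ha) (hu₁ hb) hcase hJ (hu₂ hξ₂)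
  exact integral_mul_conj_eq_zero_of_disjoint (pairing (mul ℂ ℂ) φ u₁) u₂ hdisj
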